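/- Let K be a finite field with char K > 3 and U ⊆ K a subset having at most one solution to x + y = 0 in U (i.e., at most one pair u, −u ∈ U, counting u = 0). Then S = {(x, x³) : x ∈ U} is a Sidon set in K². Conversely, if S is Sidon then U has at most one such solution. -/

import Mathlib

/-!
If `x + y = z + w = s`, then `x³ + y³ - (z³ + w³) = 3s(zw - xy)`, so equal sums of cubes force
`xy = zw` once `3s ≠ 0`, and a sum together with a product determines the pair. The sum `s = 0`
is the exception: for every `x`, the points `(x, x³)` and `(-x, -x³)` sum to `(0, 0)`.
-/

def IsSidon {G : Type*} [Add G] (S : Set G) : Prop :=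
  ∀ a ∈ S, ∀ b ∈ S, ∀ c ∈ S, ∀ d ∈ S, a + b = c + d → ({a, b} : Set G) = {c, d}

def cubicGraph {K : Type*} [Monoid K] (U : Set K) : Set (K × K) :=
  {s | ∃ x ∈ U, s = (x, x ^ 3)}

def AtMostOneZeroSumPair {K : Type*} [AddZeroClass K] (U : Set K) : Prop :=
  ∀ x ∈ U, ∀ y ∈ U, x + y = 0 → ∀ x' ∈ U, ∀ y' ∈ U, x' + y' = 0 → ({x, y} : Set K) = {x', y'}

theorem graph_pair_eq_pair_iff {α β : Type*} (f : α → β) {x y z w : α} :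
    ({(x, f x), (y, f y)} : Set (α × β)) = {(z, f z), (w, f w)} ↔ ({x, y} : Set α) = {z, w} := by
  have hinj : Function.Injective fun t => (t, f t) := fun _ _ h => congrArg Prod.fst h
  simpa only [Set.image_pair] using
    (Set.image_injective.2 hinj).eq_iff (a := ({x, y} : Set α)) (b := {z, w})

section CommRing

variable {R : Type*} [CommRing R] [IsDomain R] {x y z w : R}

theorem pair_eq_pair_of_add_eq_of_mul_eq (hs : x + y = z + w) (hp : x * y = z * w) :
    ({x, y} : Set R) = {z, w} := by
  have : (z - x) * (z - y) = 0 := by linear_combination -z * hs + hp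
  rcases mul_eq_zero.mp this with h | h
  · obtain rfl : z = x := sub_eq_zero.mp h
    obtain rfl : w = y := by linear_combination -hs
    rfl
  · obtain rfl : z = y := sub_eq_zero.mp h
    obtain rfl : w = x := by linear_combination -hs
    exact Set.pair_comm _ _

theorem mul_eq_mul_of_add_eq_of_cube_add_eq (h3 : (3 : R) ≠ 0) (h0 : x + y ≠ 0)
    (hs : x + y = z + w) (hc : x ^ 3 + y ^ 3 = z ^ 3 + w ^ 3) : x * y = z * w := by
  have : 3 * (x + y) * (x * y - z * w) = 0 := by
    linear_combination ((x + y) ^ 2 + (x + y) * (z + w) + (z + w) ^ 2 - 3 * z * w) * hs - hc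
  exact sub_eq_zero.mp ((mul_eq_zero.mp this).resolve_left (mul_ne_zero h3 h0))

theorem isSidon_cubicGraph {U : Set R} (h3 : (3 : R) ≠ 0) (hU : AtMostOneZeroSumPair U) :
    IsSidon (cubicGraph U) := by
  rintro _ ⟨x, hx, rfl⟩ _ ⟨y, hy, rfl⟩ _ ⟨z, hz, rfl⟩ _ ⟨w, hw, rfl⟩ hsum
  rw [Prod.mk_add_mk, Prod.mk_add_mk, Prod.mk.injEq] at hsum
  obtain ⟨hs, hc⟩ := hsum
  refine (graph_pair_eq_pair_iff fun t : R => t ^ 3).mpr ?_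
  by_cases h0 : x + y = 0
  · exact hU x hx y hy h0 z hz w hw (hs ▸ h0)
  · exact pair_eq_pair_of_add_eq_of_mul_eq hs (mul_eq_mul_of_add_eq_of_cube_add_eq h3 h0 hs hc)

end CommRing

theorem atMostOneZeroSumPair_of_isSidon_cubicGraph {R : Type*} [CommRing R] {U : Set R}
    (hS : IsSidon (cubicGraph U)) : AtMostOneZeroSumPair U := by
  intro x hx y hy hxy x' hx' y' hy' hxy'
  refine (graph_pair_eq_pair_iff fun t : R => t ^ 3).mp
    (hS _ ⟨x, hx, rfl⟩ _ ⟨y, hy, rfl⟩ _ ⟨x', hx', rfl⟩ _ ⟨y', hy', rfl⟩ ?_)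
  obtain rfl : y = -x := eq_neg_of_add_eq_zero_right hxy
  obtain rfl : y' = -x' := eq_neg_of_add_eq_zero_right hxy'
  rw [Prod.mk_add_mk, Prod.mk_add_mk]
  congr 1 <;> ring

theorem cubic_graph_sidon_iff_general {K : Type*} [Field K]
    (hchar : 3 < ringChar K) (U : Set K) :
    (∀ a ∈ {s : K × K | ∃ x ∈ U, s = (x, x ^ 3)},
     ∀ b ∈ {s : K × K | ∃ x ∈ U, s = (x, x ^ 3)},
     ∀ c ∈ {s : K × K | ∃ x ∈ U, s = (x, x ^ 3)},
     ∀ d ∈ {s : K × K | ∃ x ∈ U, s = (x, x ^ 3)},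
        a + b = c + d → ({a, b} : Set (K × K)) = {c, d}) ↔
    (∀ x ∈ U, ∀ y ∈ U, x + y = 0 → ∀ x' ∈ U, ∀ y' ∈ U, x' + y' = 0 →
      ({x, y} : Set K) = {x', y'}) := by
  have h3 : (3 : K) ≠ 0 := CharP.cast_ne_zero_of_ne_of_prime K Nat.prime_three hchar.ne'
  exact ⟨atMostOneZeroSumPair_of_isSidon_cubicGraph, isSidon_cubicGraph h3⟩

/-- For `char K > 3`, the cubic graph `{(x, x³) : x ∈ U}` is a Sidon set in `K²`
if and only if `U` has at most one solution to `x + y = 0`. -/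
theorem cubic_graph_sidon_iff {K : Type*} [Field K] [Fintype K]
    (hchar : 3 < ringChar K) (U : Set K) :
    (∀ a ∈ {s : K × K | ∃ x ∈ U, s = (x, x ^ 3)},
     ∀ b ∈ {s : K × K | ∃ x ∈ U, s = (x, x ^ 3)},
     ∀ c ∈ {s : K × K | ∃ x ∈ U, s = (x, x ^ 3)},
     ∀ d ∈ {s : K × K | ∃ x ∈ U, s = (x, x ^ 3)},
        a + b = c + d → ({a, b} : Set (K × K)) = {c, d}) ↔
    (∀ x ∈ U, ∀ y ∈ U, x + y = 0 → ∀ x' ∈ U, ∀ y' ∈ U, x' + y' = 0 →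
      ({x, y} : Set K) = {x', y'}) :=
  cubic_graph_sidon_iff_general hchar U
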